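/- Let H be a nonzero isolated subgroup of Γ. Then there exists a nonempty final (upper) subset J of T such that H = ⋃_{t ∈ J} H_t. -/

import Mathlib

/-- The carrier of Γ: functions `T → G` with well-ordered support. -/
def Gamma (T G : Type*) [LinearOrder T] [Zero G] [LT G] : Set (T → G) :=
  {f | (Function.support f).IsWF}

/-- The (left-to-right lexicographic) order on functions `T → G`:
`f ≤ g` iff `f = g` or `f` and `g` agree before some point `t` at which `f t < g t`. -/
def lexLE {T G : Type*} [LinearOrder T] [LT G] (f g : T → G) : Prop :=
  f = g ∨ ∃ t, (∀ s, s < t → f s = g s) ∧ f t < g t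

/-- `H` is an isolated subgroup of Γ: a subgroup of Γ that is convex for the
lexicographic order. -/
def IsIsolated (T G : Type*) [LinearOrder T] [AddCommGroup G] [LinearOrder G] [IsOrderedAddMonoid G]
    (H : Set (T → G)) : Prop :=
  H ⊆ Gamma T G ∧ (0 : T → G) ∈ H ∧ (∀ f ∈ H, ∀ g ∈ H, f + g ∈ H) ∧
  (∀ f ∈ H, -f ∈ H) ∧
  ∀ h ∈ H, ∀ g ∈ Gamma T G, lexLE 0 g → lexLE g h → g ∈ H

/-- The T-isolated subgroup `H_t`: elements of Γ vanishing strictly before `t`. -/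
def Ht (T G : Type*) [LinearOrder T] [Zero G] [LT G] (t : T) : Set (T → G) :=
  {f ∈ Gamma T G | ∀ s, s < t → f s = 0}

/-- The dual T-isolated subgroup `dH_t`: elements of Γ vanishing at and before `t`. -/
def dHt (T G : Type*) [LinearOrder T] [Zero G] [LT G] (t : T) : Set (T → G) :=
  {f ∈ Gamma T G | ∀ s, s ≤ t → f s = 0}

/-! The leading index `t` of a nonzero `h ∈ H` satisfies `h ∈ H_t ⊆ H`: after replacing `h` by `-h`
its leading coefficient `h t` is positive, and since `G` is archimedean every `g ∈ H_t` with
`0 ≤ g` lies below some multiple `n • h`, so `g ∈ H` by convexity. Hence `H` is the union of the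
`H_t` it contains, and these `t` form a final segment because `H_t` shrinks as `t` grows. -/

section Gamma

variable {T G : Type*} [LinearOrder T]

lemma exists_first_ne_zero_of_mem_Gamma [Zero G] [LT G] {f : T → G} (hf : f ∈ Gamma T G)
    (hf0 : f ≠ 0) : ∃ t, (∀ s, s < t → f s = 0) ∧ f t ≠ 0 := by
  have hne : (Function.support f).Nonempty := Function.support_nonempty_iff.2 hf0
  refine ⟨Set.IsWF.min hf hne, fun s hs => ?_, Set.IsWF.min_mem hf hne⟩
  by_contra hfs
  exact Set.IsWF.not_lt_min hf hne hfs hs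

lemma zero_mem_Ht [Zero G] [LT G] (t : T) : (0 : T → G) ∈ Ht T G t :=
  ⟨by simp [Gamma], fun _ _ => rfl⟩

lemma Ht_antitone [Zero G] [LT G] {t u : T} (htu : t ≤ u) : Ht T G u ⊆ Ht T G t :=
  fun _ hf => ⟨hf.1, fun s hs => hf.2 s (hs.trans_le htu)⟩

variable [AddCommGroup G] [LinearOrder G]

lemma neg_mem_Ht {t : T} {f : T → G} (hf : f ∈ Ht T G t) : -f ∈ Ht T G t :=
  ⟨by simpa [Gamma, Function.support_neg] using hf.1, fun s hs => by simp [hf.2 s hs]⟩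

lemma lexLE_zero_or_lexLE_zero_neg [IsOrderedAddMonoid G] {f : T → G} (hf : f ∈ Gamma T G) :
    lexLE 0 f ∨ lexLE 0 (-f) := by
  by_cases hf0 : f = 0
  · exact Or.inl (Or.inl hf0.symm)
  obtain ⟨t, hbefore, hft⟩ := exists_first_ne_zero_of_mem_Gamma hf hf0
  rcases hft.lt_or_gt with hneg | hpos
  · exact Or.inr (Or.inr ⟨t, fun s hs => by simp [hbefore s hs], by simpa using hneg⟩)
  · exact Or.inl (Or.inr ⟨t, fun s hs => (hbefore s hs).symm, hpos⟩)

end Gamma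

namespace IsIsolated

variable {T G : Type*} [LinearOrder T] [AddCommGroup G] [LinearOrder G] [IsOrderedAddMonoid G]
  {H : Set (T → G)}

lemma nsmul_mem (hH : IsIsolated T G H) {f : T → G} (hf : f ∈ H) (n : ℕ) : n • f ∈ H := by
  induction n with
  | zero => simpa using hH.2.1
  | succ n ih => simpa [succ_nsmul] using hH.2.2.1 _ ih _ hf

lemma mem_of_neg_mem (hH : IsIsolated T G H) {f : T → G} (hf : -f ∈ H) : f ∈ H := by
  simpa using hH.2.2.2.1 _ hf

lemma mem_of_lexLE_zero [Archimedean G] (hH : IsIsolated T G H) {t : T} {f g : T → G}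
    (hf : f ∈ H) (hbefore : ∀ s, s < t → f s = 0) (hpos : 0 < f t) (hg : g ∈ Ht T G t)
    (hg0 : lexLE 0 g) : g ∈ H := by
  obtain ⟨n, hn⟩ := Archimedean.arch (g t) hpos
  have hlt : g t < ((n + 1) • f) t := by
    calc g t ≤ n • f t := hn
      _ < n • f t + f t := lt_add_of_pos_right _ hpos
      _ = ((n + 1) • f) t := by simp [succ_nsmul]
  refine hH.2.2.2.2 _ (hH.nsmul_mem hf (n + 1)) g hg.1 hg0 (Or.inr ⟨t, fun s hs => ?_, hlt⟩)
  simp [hg.2 s hs, hbefore s hs]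

lemma Ht_subset_of_pos [Archimedean G] (hH : IsIsolated T G H) {t : T} {f : T → G}
    (hf : f ∈ H) (hbefore : ∀ s, s < t → f s = 0) (hpos : 0 < f t) : Ht T G t ⊆ H := by
  intro g hg
  rcases lexLE_zero_or_lexLE_zero_neg hg.1 with hg0 | hg0
  · exact hH.mem_of_lexLE_zero hf hbefore hpos hg hg0
  · exact hH.mem_of_neg_mem (hH.mem_of_lexLE_zero hf hbefore hpos (neg_mem_Ht hg) hg0)

lemma exists_mem_Ht_subset [Archimedean G] (hH : IsIsolated T G H) {h : T → G} (hh : h ∈ H)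
    (hh0 : h ≠ 0) : ∃ t, h ∈ Ht T G t ∧ Ht T G t ⊆ H := by
  obtain ⟨t, hbefore, hht⟩ := exists_first_ne_zero_of_mem_Gamma (hH.1 hh) hh0
  refine ⟨t, ⟨hH.1 hh, hbefore⟩, ?_⟩
  rcases hht.lt_or_gt with hneg | hpos
  · exact hH.Ht_subset_of_pos (hH.2.2.2.1 _ hh) (fun s hs => by simp [hbefore s hs])
      (by simpa using hneg)
  · exact hH.Ht_subset_of_pos hh hbefore hpos

end IsIsolated

theorem stmt13_general {T G : Type*} [LinearOrder T]
    [AddCommGroup G] [LinearOrder G] [IsOrderedAddMonoid G] [Archimedean G]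
    (H : Set (T → G)) (hH : IsIsolated T G H) (hne : H ≠ {0}) :
    ∃ J : Set T, J.Nonempty ∧ (∀ t ∈ J, ∀ s, t ≤ s → s ∈ J) ∧
      H = ⋃ t ∈ J, Ht T G t := by
  obtain ⟨f, hf, hf0⟩ : ∃ f ∈ H, f ≠ 0 := by
    by_contra! hall
    exact hne (Set.eq_singleton_iff_unique_mem.2 ⟨hH.2.1, hall⟩)
  obtain ⟨t₀, -, ht₀⟩ := hH.exists_mem_Ht_subset hf hf0
  refine ⟨{t | Ht T G t ⊆ H}, ⟨t₀, ht₀⟩, fun t ht s hts => (Ht_antitone hts).trans ht, ?_⟩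
  refine Set.Subset.antisymm (fun h hh => ?_) (Set.iUnion₂_subset fun t ht => ht)
  rw [Set.mem_iUnion₂]
  by_cases hh0 : h = 0
  · exact ⟨t₀, ht₀, hh0 ▸ zero_mem_Ht t₀⟩
  · obtain ⟨t, hht, ht⟩ := hH.exists_mem_Ht_subset hh hh0
    exact ⟨t, ht, hht⟩

theorem stmt13 {T G : Type*} [LinearOrder T] [Nonempty T]
    [AddCommGroup G] [LinearOrder G] [IsOrderedAddMonoid G] [Archimedean G] [Nontrivial G]
    (H : Set (T → G)) (hH : IsIsolated T G H) (hne : H ≠ {0}) :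
    ∃ J : Set T, J.Nonempty ∧ (∀ t ∈ J, ∀ s, t ≤ s → s ∈ J) ∧
      H = ⋃ t ∈ J, Ht T G t :=
  stmt13_general H hH hne
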